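/- For Case B, L_g L_f² h(x) = T_sup·√(p_L + α·p_sup − p_lp)·ω²·K, which is nonzero under the conditions T_sup ≠ 0, ω ≠ 0, K ≠ 0, p_L + α·p_sup − p_lp > 0, so the relative degree in Case B is also 3. -/

import Mathlib

/-!
The control direction `g = (0, 0, ω²K, 0)` only moves the coordinate `x 2`. Along the line
`t ↦ x + t • g`, the functions `h` and `L_f h` do not involve `x 2` and so are constant, while
`L_f² h` is affine in `x 2` with slope `T_sup · √(x 0 + α x 1 - p_lp)`. For differentiable
functions the Fréchet derivative in direction `g` is the derivative along that line.
-/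

theorem fderiv_apply_eq_of_affine_on_line {𝕜 E F : Type*} [NontriviallyNormedField 𝕜]
    [NormedAddCommGroup E] [NormedSpace 𝕜 E] [NormedAddCommGroup F] [NormedSpace 𝕜 F]
    {f : E → F} {x v : E} {c : F} (hf : DifferentiableAt 𝕜 f x)
    (hline : ∀ t : 𝕜, f (x + t • v) = f x + t • c) :
    fderiv 𝕜 f x v = c := by
  rw [← hf.lineDeriv_eq_fderiv, lineDeriv, funext hline, deriv_const_add]
  simpa using ((hasDerivAt_id (0 : 𝕜)).smul_const c).deriv

theorem add_smul_vecCons_apply (x : Fin 4 → ℝ) (a t : ℝ) :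
    (x + t • ![0, 0, a, 0]) 0 = x 0 ∧ (x + t • ![0, 0, a, 0]) 1 = x 1 ∧
    (x + t • ![0, 0, a, 0]) 2 = x 2 + t * a ∧ (x + t • ![0, 0, a, 0]) 3 = x 3 := by
  simp

theorem stmt18_general (T_L T_sup ω K α p_lp : ℝ)
    (h : (Fin 4 → ℝ) → ℝ) (hh : h = fun x => x 1)
    (Lfh : (Fin 4 → ℝ) → ℝ)
    (hLfh : Lfh = fun x => T_sup * x 3 * Real.sqrt (x 0 + α * x 1 - p_lp))
    (Lf2h : (Fin 4 → ℝ) → ℝ)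
    (hLf2h : Lf2h = fun x => (1/2) * T_sup * (α * T_sup + T_L) * (x 3)^2
          + T_sup * x 2 * Real.sqrt (x 0 + α * x 1 - p_lp))
    (g : Fin 4 → ℝ) (hg : g = ![0, 0, ω^2 * K, 0]) :
    ∀ x : Fin 4 → ℝ, x 0 + α * x 1 - p_lp > 0 →
      fderiv ℝ Lf2h x g = T_sup * Real.sqrt (x 0 + α * x 1 - p_lp) * ω^2 * K ∧
      (T_sup ≠ 0 → ω ≠ 0 → K ≠ 0 →
        fderiv ℝ h x g = 0 ∧ fderiv ℝ Lfh x g = 0 ∧ fderiv ℝ Lf2h x g ≠ 0) := by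
  intro x hx
  subst hh hLfh hLf2h hg
  have hsqrt : DifferentiableAt ℝ (fun y : Fin 4 → ℝ => √(y 0 + α * y 1 - p_lp)) x :=
    (by fun_prop : DifferentiableAt ℝ (fun y : Fin 4 → ℝ => y 0 + α * y 1 - p_lp) x).sqrt hx.ne'
  have hLgLf2h : fderiv ℝ (fun x : Fin 4 → ℝ => (1/2) * T_sup * (α * T_sup + T_L) * (x 3)^2
      + T_sup * x 2 * √(x 0 + α * x 1 - p_lp)) x ![0, 0, ω^2 * K, 0]
        = T_sup * √(x 0 + α * x 1 - p_lp) * ω^2 * K := by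
    refine fderiv_apply_eq_of_affine_on_line (by fun_prop) fun t => ?_
    simp only [add_smul_vecCons_apply, smul_eq_mul]
    ring
  refine ⟨hLgLf2h, fun hT hω hK => ⟨?_, ?_, ?_⟩⟩
  · exact fderiv_apply_eq_of_affine_on_line (c := 0) (by fun_prop) fun t => by
      simp only [add_smul_vecCons_apply, smul_zero, add_zero]
  · exact fderiv_apply_eq_of_affine_on_line (c := 0) (by fun_prop) fun t => by
      simp only [add_smul_vecCons_apply, smul_zero, add_zero]
  · have hr : √(x 0 + α * x 1 - p_lp) ≠ 0 := (Real.sqrt_pos.2 hx).ne'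
    rw [hLgLf2h]
    positivity

/-- For Case B, with
L_f² h(x) = (1/2)·T_sup·(α·T_sup + T_L)·x_v² + T_sup·v·r
(r = √(p_L + α·p_sup − p_lp)) and g = (0,0,ω²K,0),
L_g L_f² h(x) = T_sup·r·ω²·K, nonzero when T_sup ≠ 0, ω ≠ 0, K ≠ 0, r² > 0;
with L_g h = 0 and L_g L_f h = 0 the relative degree in Case B is also 3. -/
theorem stmt18 (T_L T_sup D ω K α p_lp : ℝ)
    (h : (Fin 4 → ℝ) → ℝ) (hh : h = fun x => x 1)
    (Lfh : (Fin 4 → ℝ) → ℝ)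
    (hLfh : Lfh = fun x => T_sup * x 3 * Real.sqrt (x 0 + α * x 1 - p_lp))
    (Lf2h : (Fin 4 → ℝ) → ℝ)
    (hLf2h : Lf2h = fun x => (1/2) * T_sup * (α * T_sup + T_L) * (x 3)^2
          + T_sup * x 2 * Real.sqrt (x 0 + α * x 1 - p_lp))
    (g : Fin 4 → ℝ) (hg : g = ![0, 0, ω^2 * K, 0]) :
    ∀ x : Fin 4 → ℝ, x 0 + α * x 1 - p_lp > 0 →
      fderiv ℝ Lf2h x g = T_sup * Real.sqrt (x 0 + α * x 1 - p_lp) * ω^2 * K ∧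
      (T_sup ≠ 0 → ω ≠ 0 → K ≠ 0 →
        fderiv ℝ h x g = 0 ∧ fderiv ℝ Lfh x g = 0 ∧ fderiv ℝ Lf2h x g ≠ 0) :=
  stmt18_general T_L T_sup ω K α p_lp h hh Lfh hLfh Lf2h hLf2h g hg
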